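/- arXiv:2502.15048 — 4 statements merged into one kernel-verified Lean document; each statement's English description precedes it below -/
import Mathlib

section
/- Let (R, m, k) be a commutative Noetherian local ring and X an R-module. If the socle of X is not contained in mX, then k is a direct summand of X as an R-module. -/
/-!
An element `x` killed by a maximal ideal `I` spans a copy of `R ⧸ I`, via `σ : r ↦ r • x`.
If moreover `x ∉ I • X`, its image in the `R ⧸ I`-vector space `X ⧸ I • X` is nonzero, so some
functional `φ : X → R ⧸ I` sends `x` to `1`. Then `φ ∘ σ = id`, and `X ≅ R ⧸ I × ker φ`.
-/

namespace LinearMap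

variable {R X M : Type*} [Ring R] [AddCommGroup X] [AddCommGroup M] [Module R X] [Module R M]

noncomputable def equivProdKerOfCompEqId (φ : X →ₗ[R] M) (σ : M →ₗ[R] X) (h : φ ∘ₗ σ = id) :
    X ≃ₗ[R] M × ker φ :=
  (((exact_subtype_ker_map φ).splitSurjectiveEquiv (ker φ).injective_subtype ⟨σ, h⟩).1 :
    X ≃ₗ[R] ker φ × M).trans (LinearEquiv.prodComm R _ _)

end LinearMap

namespace Submodule

variable {R X : Type*} [CommRing R] [AddCommGroup X] [Module R X] {I : Ideal R}

theorem exists_linearMap_quotient_apply_eq_one [I.IsMaximal] {x : X}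
    (hx : x ∉ I • (⊤ : Submodule R X)) :
    ∃ φ : X →ₗ[R] R ⧸ I, φ x = 1 := by
  let := Ideal.Quotient.field I
  have hx' : mkQ (I • ⊤) x ≠ 0 := fun h => hx ((Quotient.mk_eq_zero _).mp h)
  obtain ⟨g, hg⟩ := Module.Projective.exists_dual_eq_one (R ⧸ I) hx'
  exact ⟨g.restrictScalars R ∘ₗ mkQ _, hg⟩

theorem exists_linearEquiv_quotient_prod_of_smul_eq_zero [I.IsMaximal] {x : X}
    (hann : ∀ r ∈ I, r • x = 0) (hx : x ∉ I • (⊤ : Submodule R X)) :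
    ∃ Y : Submodule R X, Nonempty (X ≃ₗ[R] (R ⧸ I) × Y) := by
  obtain ⟨φ, hφ⟩ := exists_linearMap_quotient_apply_eq_one hx
  let σ : R ⧸ I →ₗ[R] X := I.liftQ (LinearMap.toSpanSingleton R X x) fun r hr => hann r hr
  have hσ : φ ∘ₗ σ = LinearMap.id := by
    refine linearMap_qext _ (LinearMap.ext_ring ?_)
    change φ ((1 : R) • x) = 1
    rw [one_smul, hφ]
  exact ⟨_, ⟨φ.equivProdKerOfCompEqId σ hσ⟩⟩

end Submodule

open IsLocalRing

theorem stmt_0_general (R : Type) [CommRing R] [IsLocalRing R]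
    (X : Type) [AddCommGroup X] [Module R X]
    (hsoc : ∃ x : X, (∀ r ∈ maximalIdeal R, r • x = 0) ∧
      x ∉ (maximalIdeal R) • (⊤ : Submodule R X)) :
    ∃ Y : Submodule R X, Nonempty (X ≃ₗ[R] (ResidueField R × Y)) :=
  let ⟨_, hann, hx⟩ := hsoc
  Submodule.exists_linearEquiv_quotient_prod_of_smul_eq_zero hann hx

/-- If the socle of `X` is not contained in `m • X`, then the residue field `k`
is a direct summand of `X` as an `R`-module. -/
theorem stmt_0 (R : Type) [CommRing R] [IsNoetherianRing R] [IsLocalRing R]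
    (X : Type) [AddCommGroup X] [Module R X]
    (hsoc : ∃ x : X, (∀ r ∈ maximalIdeal R, r • x = 0) ∧
      x ∉ (maximalIdeal R) • (⊤ : Submodule R X)) :
    ∃ Y : Submodule R X, Nonempty (X ≃ₗ[R] (ResidueField R × Y)) :=
  stmt_0_general R X hsoc
end

section
/- Let (R, m, k) be a commutative Noetherian local ring, I an ideal of R, M a finitely generated R-module with √I = √(Ann_R M), and N an arbitrary R-module. Then Hom_R(M, N) = 0 if and only if Hom_R(R/I, N) = 0. -/
/-!
Both sides are governed by the associated primes of `N`: `Hom_R(M, N) ≠ 0` iff some associated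
prime `P` of `N` contains `Ann_R M`. A nonzero value `φ m` has annihilator containing `Ann_R M`,
and that annihilator lies in an associated prime. Conversely, at such a `P` the module `M_P` is
nonzero, so it surjects onto the residue field of `R_P`, which embeds into `N_P` because `P R_P`
is associated to `N_P`; as `M` is finitely presented, `Hom_R(M, N)_P = Hom_{R_P}(M_P, N_P)`, so
`Hom_R(M, N) ≠ 0`. A prime contains `Ann_R M` iff it contains `√(Ann_R M) = √I = √(Ann_R (R/I))`.
-/

open IsLocalRing

section

variable {R M N : Type*} [CommRing R] [AddCommGroup M] [Module R M] [AddCommGroup N] [Module R N]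

theorem IsLocalRing.exists_surjective_linearMap_quotient_maximalIdeal [IsLocalRing R]
    [Module.Finite R M] [Nontrivial M] :
    ∃ f : M →ₗ[R] R ⧸ maximalIdeal R, Function.Surjective f := by
  obtain ⟨K, hK⟩ := (eq_top_or_exists_le_coatom (⊥ : Submodule R M)).resolve_left bot_ne_top
  have : IsSimpleModule R (M ⧸ K) := isSimpleModule_iff_isCoatom.mpr hK.1
  obtain ⟨I, hI, ⟨e⟩⟩ := isSimpleModule_iff_quot_maximal.mp this
  obtain rfl := IsLocalRing.eq_maximalIdeal hI
  exact ⟨e.toLinearMap ∘ₗ K.mkQ, e.surjective.comp K.mkQ_surjective⟩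

theorem IsLocalRing.nontrivial_linearMap_of_isAssociatedPrime_maximalIdeal [IsLocalRing R]
    [IsNoetherianRing R] [Module.Finite R M] [Nontrivial M]
    (h : IsAssociatedPrime (maximalIdeal R) N) : Nontrivial (M →ₗ[R] N) := by
  obtain ⟨f, hf⟩ := exists_surjective_linearMap_quotient_maximalIdeal (R := R) (M := M)
  obtain ⟨-, g, hg⟩ := (isAssociatedPrime_iff_exists_injective_linearMap _ _).mp h
  obtain ⟨m, hm⟩ := hf 1
  refine ⟨g ∘ₗ f, 0, fun h0 ↦ one_ne_zero (α := R ⧸ maximalIdeal R) (hg ?_)⟩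
  rw [← hm, map_zero, ← LinearMap.comp_apply, h0, LinearMap.zero_apply]

theorem nontrivial_linearMap_of_isAssociatedPrime [IsNoetherianRing R] [Module.Finite R M]
    {P : Ideal R} (hP : IsAssociatedPrime P N) (hPM : Module.annihilator R M ≤ P) :
    Nontrivial (M →ₗ[R] N) := by
  have := hP.isPrime
  have : Nontrivial (LocalizedModule.AtPrime P M) :=
    Module.mem_support_iff.mp ((Module.mem_support_iff_of_finite (p := ⟨P, hP.isPrime⟩)).mpr hPM)
  have : Nontrivial (LocalizedModule.AtPrime P M →ₗ[Localization.AtPrime P]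
      LocalizedModule.AtPrime P N) :=
    nontrivial_linearMap_of_isAssociatedPrime_maximalIdeal
      (Module.associatedPrimes.mem_associatedPrimes_atPrime_of_mem_associatedPrimes hP)
  have := Module.finitePresentation_of_finite R M
  have : Nontrivial (LocalizedModule P.primeCompl (M →ₗ[R] N)) :=
    (Module.FinitePresentation.linearEquivMapExtendScalars P.primeCompl).nontrivial
  refine (subsingleton_or_nontrivial (M →ₗ[R] N)).resolve_left fun _ ↦ ?_
  exact false_of_nontrivial_of_subsingleton (LocalizedModule P.primeCompl (M →ₗ[R] N))

theorem exists_isAssociatedPrime_annihilator_le_of_ne_zero [IsNoetherianRing R]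
    {φ : M →ₗ[R] N} (hφ : φ ≠ 0) :
    ∃ P : Ideal R, IsAssociatedPrime P N ∧ Module.annihilator R M ≤ P := by
  obtain ⟨m, hm⟩ : ∃ m, φ m ≠ 0 := by
    by_contra! h
    exact hφ (LinearMap.ext h)
  obtain ⟨P, hP, hle⟩ := exists_le_isAssociatedPrime_of_isNoetherianRing R (φ m) hm
  refine ⟨P, hP, le_trans (fun r hr ↦ ?_) hle⟩
  rw [Submodule.mem_colon_singleton, Submodule.mem_bot, ← map_smul,
    Module.mem_annihilator.mp hr m, map_zero]

theorem nontrivial_linearMap_iff_exists_isAssociatedPrime [IsNoetherianRing R]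
    [Module.Finite R M] :
    Nontrivial (M →ₗ[R] N) ↔ ∃ P : Ideal R, IsAssociatedPrime P N ∧ Module.annihilator R M ≤ P :=
  ⟨fun _ ↦ exists_isAssociatedPrime_annihilator_le_of_ne_zero (exists_ne 0).choose_spec,
    fun ⟨_, hP, hPM⟩ ↦ nontrivial_linearMap_of_isAssociatedPrime hP hPM⟩

theorem subsingleton_linearMap_iff_of_radical_annihilator_eq {M' : Type*} [AddCommGroup M']
    [Module R M'] [IsNoetherianRing R] [Module.Finite R M] [Module.Finite R M']
    (h : (Module.annihilator R M).radical = (Module.annihilator R M').radical) :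
    Subsingleton (M →ₗ[R] N) ↔ Subsingleton (M' →ₗ[R] N) := by
  simp only [← not_nontrivial_iff_subsingleton, nontrivial_linearMap_iff_exists_isAssociatedPrime]
  refine not_congr (exists_congr fun P ↦ and_congr_right fun hP ↦ ?_)
  rw [← hP.isPrime.radical_le_iff, h, hP.isPrime.radical_le_iff]

end

theorem stmt_5_general (R : Type) [CommRing R] [IsNoetherianRing R]
    (I : Ideal R)
    (M : Type) [AddCommGroup M] [Module R M] [Module.Finite R M]
    (N : Type) [AddCommGroup N] [Module R N]
    (hrad : I.radical = (Module.annihilator R M).radical) :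
    (∀ φ : M →ₗ[R] N, φ = 0) ↔ (∀ φ : (R ⧸ I) →ₗ[R] N, φ = 0) := by
  rw [← subsingleton_iff_forall_eq 0, ← subsingleton_iff_forall_eq 0]
  exact subsingleton_linearMap_iff_of_radical_annihilator_eq
    (by rw [Ideal.annihilator_quotient, hrad])

/-- If `√I = √(Ann_R M)` for a finitely generated module `M` over a Noetherian local ring,
then `Hom_R(M, N) = 0` iff `Hom_R(R/I, N) = 0`, for any module `N`. -/
theorem stmt_5 (R : Type) [CommRing R] [IsNoetherianRing R] [IsLocalRing R]
    (I : Ideal R)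
    (M : Type) [AddCommGroup M] [Module R M] [Module.Finite R M]
    (N : Type) [AddCommGroup N] [Module R N]
    (hrad : I.radical = (Module.annihilator R M).radical) :
    (∀ φ : M →ₗ[R] N, φ = 0) ↔ (∀ φ : (R ⧸ I) →ₗ[R] N, φ = 0) :=
  stmt_5_general R I M N hrad
end

section
/- Let (R, m, k) be a commutative Noetherian local ring, I an ideal of R, M a finitely generated R-module with √I = √(Ann_R M), and N an arbitrary R-module. Then M ⊗_R N = 0 if and only if N = I·N. -/
/-!
If `N = I•N` then `N = Iⁿ•N` for the power `Iⁿ ⊆ Ann M`, so every `m ⊗ n` vanishes.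
Conversely, put `P = N/IN`, so `M ⊗ P = 0`, and use the character module `P^∨` in place of the
Matlis dual: `Hom(M, P^∨) ≅ (M ⊗ P)^∨ = 0`. If `P ≠ 0`, then `P^∨ ≠ 0` is killed by `I`, so it has
an associated prime `p ⊇ I`, hence `p ⊇ Ann M`, and `R/p ↪ P^∨`. But `Hom(M, R/p) ≠ 0`, since no
element of `Ann M ⊆ p` is a nonzerodivisor on `R/p`.
-/

open scoped TensorProduct

theorem Submodule.pow_smul_eq_self_of_smul_eq_self {R N : Type*} [CommRing R] [AddCommGroup N]
    [Module R N] {I : Ideal R} {P : Submodule R N} (h : I • P = P) (n : ℕ) : I ^ n • P = P := by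
  induction n with
  | zero => rw [pow_zero, Ideal.one_eq_top, Submodule.top_smul]
  | succ n ih => rw [pow_succ, Submodule.mul_smul, h, ih]

namespace TensorProduct

variable {R M N : Type*} [CommRing R] [AddCommGroup M] [Module R M] [AddCommGroup N] [Module R N]

theorem subsingleton_of_smul_top_eq_top {J : Ideal R} (hJ : J ≤ Module.annihilator R M)
    (h : J • (⊤ : Submodule R N) = ⊤) : Subsingleton (M ⊗[R] N) := by
  have htmul (m : M) (n : N) : m ⊗ₜ[R] n = 0 := by
    have hker : J • (⊤ : Submodule R N) ≤ LinearMap.ker (mk R M N m) :=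
      Submodule.smul_le.mpr fun r hr n _ => by
        rw [LinearMap.mem_ker, map_smul, mk_apply, smul_tmul',
          Module.mem_annihilator.mp (hJ hr), zero_tmul]
    exact hker (h.ge Submodule.mem_top)
  refine subsingleton_of_forall_eq 0 fun z => ?_
  induction z using TensorProduct.induction_on with
  | zero => rfl
  | tmul m n => exact htmul m n
  | add x y hx hy => rw [hx, hy, add_zero]

end TensorProduct

namespace CharacterModule

variable {R A : Type*} [CommRing R] [AddCommGroup A] [Module R A]

instance [Nontrivial A] : Nontrivial (CharacterModule A) := by
  obtain ⟨a, ha⟩ := exists_ne (0 : A)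
  obtain ⟨c, hc⟩ := exists_character_apply_ne_zero_of_ne_zero ha
  exact ⟨c, 0, fun h => hc (h ▸ rfl)⟩

instance [Subsingleton A] : Subsingleton (CharacterModule A) :=
  ⟨fun c c' => DFunLike.ext _ _ fun a => by rw [Subsingleton.elim a 0, map_zero, map_zero]⟩

theorem annihilator_le_annihilator :
    Module.annihilator R A ≤ Module.annihilator R (CharacterModule A) := fun r hr =>
  Module.mem_annihilator.mpr fun c => DFunLike.ext _ _ fun a => by
    rw [smul_apply, Module.mem_annihilator.mp hr, map_zero]
    rfl

end CharacterModule

namespace Module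

variable {R M : Type*} [CommRing R] [IsNoetherianRing R] [AddCommGroup M] [Module R M]
  [Module.Finite R M]

theorem nontrivial_linearMap_quotient_of_annihilator_le {J : Ideal R} (hJ : J ≠ ⊤)
    (h : Module.annihilator R M ≤ J) : Nontrivial (M →ₗ[R] R ⧸ J) := by
  have : Nontrivial (R ⧸ J) := Ideal.Quotient.nontrivial_iff.mpr hJ
  rw [← not_subsingleton_iff_nontrivial, IsSMulRegular.subsingleton_linearMap_iff]
  rintro ⟨r, hr, hreg⟩
  have hr1 : r • (1 : R ⧸ J) = r • 0 := by
    rw [smul_zero, Algebra.smul_def, mul_one, Ideal.Quotient.algebraMap_eq,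
      Ideal.Quotient.eq_zero_iff_mem]
    exact h hr
  exact one_ne_zero (hreg hr1)

theorem nontrivial_linearMap_of_annihilator_le_radical {X : Type*} [AddCommGroup X] [Module R X]
    [Nontrivial X] (h : Module.annihilator R M ≤ (Module.annihilator R X).radical) :
    Nontrivial (M →ₗ[R] X) := by
  obtain ⟨p, hp⟩ := associatedPrimes.nonempty R X
  obtain ⟨hprime, i, hi⟩ := (isAssociatedPrime_iff_exists_injective_linearMap p X).mp hp
  have hMp : Module.annihilator R M ≤ p := by
    refine h.trans ((Ideal.radical_mono ?_).trans_eq hprime.radical)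
    simpa only [Submodule.annihilator_top] using hp.annihilator_le
  have := nontrivial_linearMap_quotient_of_annihilator_le hprime.ne_top hMp
  obtain ⟨f, hf⟩ := exists_ne (0 : M →ₗ[R] R ⧸ p)
  refine ⟨i ∘ₗ f, 0, fun hif => hf (LinearMap.ext fun m => hi ?_)⟩
  simpa using LinearMap.congr_fun hif m

theorem subsingleton_of_subsingleton_tensorProduct {P : Type*} [AddCommGroup P] [Module R P]
    [Subsingleton (M ⊗[R] P)] (h : Module.annihilator R M ≤ (Module.annihilator R P).radical) :
    Subsingleton P := by
  by_contra hP
  rw [not_subsingleton_iff_nontrivial] at hP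
  have := nontrivial_linearMap_of_annihilator_le_radical (X := CharacterModule P)
    (h.trans (Ideal.radical_mono CharacterModule.annihilator_le_annihilator))
  exact not_subsingleton _
    (CharacterModule.homEquiv (R := R) (A := M) (B := P)).toEquiv.subsingleton

end Module

theorem stmt_6_general (R : Type) [CommRing R] [IsNoetherianRing R]
    (I : Ideal R)
    (M : Type) [AddCommGroup M] [Module R M] [Module.Finite R M]
    (N : Type) [AddCommGroup N] [Module R N]
    (hrad : I.radical = (Module.annihilator R M).radical) :
    Subsingleton (M ⊗[R] N) ↔ I • (⊤ : Submodule R N) = ⊤ := by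
  constructor
  · intro
    have : Subsingleton (M ⊗[R] (N ⧸ I • (⊤ : Submodule R N))) :=
      (LinearMap.lTensor_surjective M (Submodule.mkQ_surjective _)).subsingleton
    have hI : I ≤ Module.annihilator R (N ⧸ I • (⊤ : Submodule R N)) :=
      (Module.isTorsionBySet_iff_subset_annihilator ..).mp
        (Module.isTorsionBySet_quotient_ideal_smul N I)
    have := Module.subsingleton_of_subsingleton_tensorProduct (M := M)
      (Ideal.le_radical.trans (hrad.symm.le.trans (Ideal.radical_mono hI)))
    exact Submodule.Quotient.subsingleton_iff.mp this
  · intro hI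
    obtain ⟨n, hn⟩ := Ideal.exists_pow_le_of_le_radical_of_fg (hrad ▸ Ideal.le_radical)
      (IsNoetherian.noetherian I)
    exact TensorProduct.subsingleton_of_smul_top_eq_top hn
      (Submodule.pow_smul_eq_self_of_smul_eq_self hI n)

/-- If `√I = √(Ann_R M)` for a finitely generated module `M` over a Noetherian local ring,
then `M ⊗_R N = 0` iff `N = I·N`, for any module `N`. -/
theorem stmt_6 (R : Type) [CommRing R] [IsNoetherianRing R] [IsLocalRing R]
    (I : Ideal R)
    (M : Type) [AddCommGroup M] [Module R M] [Module.Finite R M]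
    (N : Type) [AddCommGroup N] [Module R N]
    (hrad : I.radical = (Module.annihilator R M).radical) :
    Subsingleton (M ⊗[R] N) ↔ I • (⊤ : Submodule R N) = ⊤ :=
  stmt_6_general R I M N hrad
end

section
/- Let R be a commutative Noetherian ring, M a finitely generated R-module with Supp_R(M) = Spec(R), and N an arbitrary R-module. Then Hom_R(M, N) = 0 if and only if N = 0, and M ⊗_R N = 0 if and only if N = 0. -/
/-!
Let `N ≠ 0` and let `p` be an associated prime of `N`, so that `R ⧸ p` embeds into `N`; it
suffices to find a nonzero map `M → R ⧸ p`. As `p ∈ Supp M`, Nakayama (`Module.support_quotient`)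
shows that `M ⧸ pM` is not a torsion module over the domain `R ⧸ p`. Hence its generic fibre is a
nonzero vector space over `Frac(R ⧸ p)`, which has a nonzero functional; since `M ⧸ pM` is finitely
presented, clearing denominators turns it into a nonzero map `M ⧸ pM → R ⧸ p`.
The tensor statement follows from the Hom statement applied to the character module of `N`,
because `Hom(M, N⋆) ≃ (M ⊗ N)⋆`.
-/

open scoped TensorProduct nonZeroDivisors

theorem LinearMap.exists_ne_zero_of_isLocalizedModule {R M N N' : Type*} [CommRing R]
    [AddCommGroup M] [Module R M] [AddCommGroup N] [Module R N] [AddCommGroup N'] [Module R N']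
    [Module.FinitePresentation R M] (S : Submonoid R) (f : N →ₗ[R] N') [IsLocalizedModule S f]
    {g : M →ₗ[R] N'} (hg : g ≠ 0) : ∃ h : M →ₗ[R] N, h ≠ 0 := by
  obtain ⟨h, s, hfh⟩ := Module.FinitePresentation.exists_lift_of_isLocalizedModule S f g
  refine ⟨h, fun h0 => hg ?_⟩
  have hs := (Module.End.isUnit_iff _).mp (IsLocalizedModule.map_units f s)
  ext m
  apply hs.injective
  simpa [h0, Submonoid.smul_def] using (LinearMap.congr_fun hfh m).symm

theorem Module.exists_dual_ne_zero_of_not_isTorsion {A K : Type*} [CommRing A] [IsDomain A]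
    [IsNoetherianRing A] [AddCommGroup K] [Module A K] [Module.Finite A K]
    (hK : ¬ Module.IsTorsion A K) : ∃ f : Module.Dual A K, f ≠ 0 := by
  have := Module.finitePresentation_of_finite A K
  obtain ⟨k, hk⟩ : ∃ k : K, ∀ a : A⁰, a • k ≠ 0 := by
    simpa [Module.IsTorsion] using hK
  let j := LocalizedModule.mkLinearMap A⁰ K
  have hjk : j k ≠ 0 := fun h => by
    obtain ⟨a, ha⟩ := (IsLocalizedModule.eq_zero_iff A⁰ j).mp h
    exact hk a ha
  obtain ⟨ℓ, hℓ⟩ : ∃ ℓ : Module.Dual (FractionRing A) (LocalizedModule A⁰ K), ℓ (j k) ≠ 0 := by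
    simpa using (Module.forall_dual_apply_eq_zero_iff (FractionRing A) (j k)).not.mpr hjk
  refine LinearMap.exists_ne_zero_of_isLocalizedModule A⁰ (Algebra.linearMap A (FractionRing A))
    (g := ℓ.restrictScalars A ∘ₗ j) fun h0 => hℓ ?_
  simpa using LinearMap.congr_fun h0 k

theorem Module.not_isTorsion_quotient_of_mem_support {R M : Type*} [CommRing R] [AddCommGroup M]
    [Module R M] [Module.Finite R M] {p : PrimeSpectrum R} (hp : p ∈ Module.support R M) :
    ¬ Module.IsTorsion (R ⧸ p.asIdeal) (M ⧸ (p.asIdeal • ⊤ : Submodule R M)) := by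
  intro htor
  obtain ⟨a, ha, ha0⟩ := Submodule.annihilator_top_inter_nonZeroDivisors htor
  obtain ⟨r, rfl⟩ := Ideal.Quotient.mk_surjective a
  have hr : r ∈ Module.annihilator R (M ⧸ (p.asIdeal • ⊤ : Submodule R M)) := by
    rw [← Module.comap_annihilator (R := R ⧸ p.asIdeal), ← Submodule.annihilator_top]
    exact ha
  have hp' : p ∈ Module.support R (M ⧸ (p.asIdeal • ⊤ : Submodule R M)) := by
    rw [Module.support_quotient]
    exact ⟨hp, (PrimeSpectrum.mem_zeroLocus _ _).mpr le_rfl⟩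
  have hrp : r ∈ p.asIdeal := Module.mem_support_iff_of_finite.mp hp' hr
  rw [Ideal.Quotient.eq_zero_iff_mem.mpr hrp] at ha0
  exact zero_notMem_nonZeroDivisors ha0

theorem Module.exists_linearMap_quotient_ne_zero_of_mem_support {R M : Type*} [CommRing R]
    [IsNoetherianRing R] [AddCommGroup M] [Module R M] [Module.Finite R M] {p : PrimeSpectrum R}
    (hp : p ∈ Module.support R M) : ∃ φ : M →ₗ[R] R ⧸ p.asIdeal, φ ≠ 0 := by
  obtain ⟨f, hf⟩ :=
    Module.exists_dual_ne_zero_of_not_isTorsion (Module.not_isTorsion_quotient_of_mem_support hp)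
  refine ⟨f.restrictScalars R ∘ₗ (p.asIdeal • ⊤ : Submodule R M).mkQ, fun h => hf ?_⟩
  refine LinearMap.ext fun x => ?_
  obtain ⟨m, rfl⟩ := Submodule.mkQ_surjective _ x
  exact LinearMap.congr_fun h m

theorem Module.exists_linearMap_ne_zero_of_support_eq_univ {R M N : Type*} [CommRing R]
    [IsNoetherianRing R] [AddCommGroup M] [Module R M] [Module.Finite R M] [AddCommGroup N]
    [Module R N] [Nontrivial N] (hsupp : Module.support R M = Set.univ) :
    ∃ φ : M →ₗ[R] N, φ ≠ 0 := by
  obtain ⟨p, hp⟩ := associatedPrimes.nonempty R N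
  obtain ⟨hprime, ι, hι⟩ := (isAssociatedPrime_iff_exists_injective_linearMap p N).mp hp
  obtain ⟨φ, hφ⟩ := Module.exists_linearMap_quotient_ne_zero_of_mem_support
    (p := ⟨p, hprime⟩) (hsupp ▸ Set.mem_univ _)
  exact ⟨ι ∘ₗ φ, fun h => hφ ((LinearMap.cancel_left hι).mp (by simpa using h))⟩

theorem Module.subsingleton_of_forall_linearMap_eq_zero {R M N : Type*} [CommRing R]
    [IsNoetherianRing R] [AddCommGroup M] [Module R M] [Module.Finite R M] [AddCommGroup N]
    [Module R N] (hsupp : Module.support R M = Set.univ) (h : ∀ φ : M →ₗ[R] N, φ = 0) :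
    Subsingleton N := by
  by_contra hN
  rw [not_subsingleton_iff_nontrivial] at hN
  obtain ⟨φ, hφ⟩ := Module.exists_linearMap_ne_zero_of_support_eq_univ (N := N) hsupp
  exact hφ (h φ)

theorem Module.subsingleton_of_subsingleton_tensorProduct_s7 {R M N : Type*} [CommRing R]
    [IsNoetherianRing R] [AddCommGroup M] [Module R M] [Module.Finite R M] [AddCommGroup N]
    [Module R N] (hsupp : Module.support R M = Set.univ) [Subsingleton (M ⊗[R] N)] :
    Subsingleton N := by
  have hdual : ∀ φ : M →ₗ[R] CharacterModule N, φ = 0 := fun φ =>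
    CharacterModule.homEquiv.injective <| by
      ext x
      rw [Subsingleton.elim x 0, map_zero, map_zero]
  have := Module.subsingleton_of_forall_linearMap_eq_zero hsupp hdual
  exact subsingleton_of_forall_eq 0 fun n =>
    CharacterModule.eq_zero_of_character_apply fun c => by rw [Subsingleton.elim c 0]; rfl

/-- If `M` is a finitely generated module over a Noetherian ring with full support, then for
any module `N`: `Hom_R(M,N) = 0` iff `N = 0`, and `M ⊗_R N = 0` iff `N = 0`. -/
theorem stmt_7 (R : Type) [CommRing R] [IsNoetherianRing R]
    (M : Type) [AddCommGroup M] [Module R M] [Module.Finite R M]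
    (hsupp : Module.support R M = Set.univ)
    (N : Type) [AddCommGroup N] [Module R N] :
    ((∀ φ : M →ₗ[R] N, φ = 0) ↔ Subsingleton N) ∧
      (Subsingleton (M ⊗[R] N) ↔ Subsingleton N) :=
  ⟨⟨Module.subsingleton_of_forall_linearMap_eq_zero hsupp, fun _ _ => Subsingleton.elim _ _⟩,
    ⟨fun _ => Module.subsingleton_of_subsingleton_tensorProduct_s7 hsupp, fun _ => inferInstance⟩⟩
end
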